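/- arXiv:1806.09656 — 8 statements merged into one kernel-verified Lean document; each statement's English description precedes it below -/
import Mathlib

section
/- For all x > 0, the Gamma function satisfies (2π)^{1/2} x^{x-1/2} e^{-x} ≤ Γ(x) ≤ (2π)^{1/2} e^{1/(12x)} x^{x-1/2} e^{-x}. -/
/-!
Write `g x = log Γ(x) - (x - 1/2) log x + x`. Expanding `log (1 + 1/x)` in powers of
`1/(2x+1)^2` gives `0 ≤ g x - g (x + 1) ≤ 1/(12x) - 1/(12(x+1))`, so `n ↦ g (x + n)` decreases
while `n ↦ g (x + n) - 1/(12(x+n))` increases. Both tend to `log (2π) / 2`, by Stirling's formula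
for `n!` combined with Euler's limit `Γ(x+n+1) ~ n! n^x`. Hence
`log (2π) / 2 ≤ g x ≤ log (2π) / 2 + 1/(12x)`, and exponentiating gives the claim.
-/

open Real Filter Topology

noncomputable def stirlingGap (x : ℝ) : ℝ :=
  log (Gamma x) - ((x - 1 / 2) * log x - x)

lemma log_Gamma_add_one {y : ℝ} (hy : 0 < y) : log (Gamma (y + 1)) = log (Gamma y) + log y := by
  rw [Gamma_add_one hy.ne', log_mul hy.ne' (Gamma_pos_of_pos hy).ne', add_comm]

lemma stirlingGap_sub_stirlingGap_add_one {x : ℝ} (hx : 0 < x) :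
    stirlingGap x - stirlingGap (x + 1) = (x + 1 / 2) * log (1 + x⁻¹) - 1 := by
  have hlog : log (1 + x⁻¹) = log (x + 1) - log x := by
    rw [← log_div (by positivity) hx.ne', add_div, div_self hx.ne', one_div]
  rw [stirlingGap, stirlingGap, log_Gamma_add_one hx, hlog]
  ring

lemma hasSum_stirlingGap_sub_stirlingGap_add_one {x : ℝ} (hx : 0 < x) :
    HasSum (fun k : ℕ => (1 : ℝ) / (2 * (k + 1) + 1) * ((2 * x + 1) ^ 2)⁻¹ ^ (k + 1))
      (stirlingGap x - stirlingGap (x + 1)) := by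
  have h : HasSum (fun k : ℕ => (1 : ℝ) / (2 * k + 1) * ((2 * x + 1) ^ 2)⁻¹ ^ k)
      ((x + 1 / 2) * log (1 + x⁻¹)) := by
    refine ((hasSum_log_one_add_inv hx).mul_left (x + 1 / 2)).congr_fun fun k => ?_
    rw [pow_succ _ (2 * k), pow_mul, ← inv_pow, one_div (2 * x + 1)]
    field_simp
  rw [stirlingGap_sub_stirlingGap_add_one hx]
  simpa using (hasSum_nat_add_iff' 1).mpr h

lemma stirlingGap_add_one_le {x : ℝ} (hx : 0 < x) : stirlingGap (x + 1) ≤ stirlingGap x :=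
  sub_nonneg.mp <| (hasSum_stirlingGap_sub_stirlingGap_add_one hx).nonneg fun k => by positivity

lemma stirlingGap_sub_stirlingGap_add_one_le {x : ℝ} (hx : 0 < x) :
    stirlingGap x - stirlingGap (x + 1) ≤ 1 / (12 * x) - 1 / (12 * (x + 1)) := by
  set r : ℝ := ((2 * x + 1) ^ 2)⁻¹
  have hr : r < 1 := inv_lt_one_of_one_lt₀ (one_lt_pow₀ (by linarith) two_ne_zero)
  have hgeom : HasSum (fun k : ℕ => 1 / 3 * r ^ (k + 1)) (1 / (12 * x) - 1 / (12 * (x + 1))) := by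
    have hsum : r / 3 * (1 - r)⁻¹ = 1 / (12 * x) - 1 / (12 * (x + 1)) := by
      have h1r : 1 - r = 4 * x * (x + 1) / (2 * x + 1) ^ 2 := by
        simp only [r]; field_simp; ring
      rw [h1r]
      simp only [r]
      field_simp
      ring
    rw [← hsum]
    refine ((hasSum_geometric_of_lt_one (by positivity) hr).mul_left (r / 3)).congr_fun fun k => ?_
    ring
  refine hasSum_le (fun k => ?_) (hasSum_stirlingGap_sub_stirlingGap_add_one hx) hgeom
  gcongr
  linarith [k.cast_nonneg (α := ℝ)]

lemma tendsto_log_factorial_sub_stirling :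
    Tendsto (fun n : ℕ => log n.factorial - (n + 1 / 2) * log n + n) atTop
      (𝓝 (log (2 * π) / 2)) := by
  have hlim := ((continuousAt_log (by positivity)).tendsto.comp
    Stirling.tendsto_stirlingSeq_sqrt_pi).add_const (log 2 / 2)
  rw [Function.comp_def, log_sqrt pi_pos.le, ← add_div, ← log_mul pi_pos.ne' two_ne_zero,
    mul_comm] at hlim
  refine hlim.congr' ?_
  filter_upwards [eventually_ne_atTop 0] with n hn
  have hn : (0 : ℝ) < n := by positivity
  rw [Stirling.log_stirlingSeq_formula, log_mul two_ne_zero hn.ne', log_div hn.ne' (exp_ne_zero 1),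
    log_exp]
  ring

lemma tendsto_log_Gamma_add_nat_sub_log_factorial {x : ℝ} (hx : 0 < x) :
    Tendsto (fun n : ℕ => log (Gamma (x + (n + 1))) - log n.factorial - x * log n) atTop (𝓝 0) := by
  have hlim := (tendsto_const_nhds (x := log (Gamma x))).sub (BohrMollerup.tendsto_log_gamma hx)
  rw [sub_self] at hlim
  refine hlim.congr fun n => ?_
  have hshift := BohrMollerup.f_add_nat_eq (f := log ∘ Gamma) (fun hy => log_Gamma_add_one hy) hx
    (n + 1)
  simp only [Function.comp_apply, Nat.cast_add_one] at hshift
  rw [BohrMollerup.logGammaSeq, hshift]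
  ring

lemma tendsto_add_mul_log_one_add_div_atTop (a b : ℝ) :
    Tendsto (fun t => (t + b) * log (1 + a / t)) atTop (𝓝 a) := by
  have hlog : Tendsto (fun t => log (1 + a / t)) atTop (𝓝 0) := by
    have h : Tendsto (fun t => 1 + a / t) atTop (𝓝 1) := by
      simpa using tendsto_const_nhds.add ((tendsto_const_nhds (x := a)).div_atTop tendsto_id)
    simpa [Function.comp_def] using (continuousAt_log one_ne_zero).tendsto.comp h
  simpa [add_mul] using (tendsto_mul_log_one_add_div_atTop a).add (hlog.const_mul b)

lemma tendsto_stirlingGap_add_nat {x : ℝ} (hx : 0 < x) :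
    Tendsto (fun n : ℕ => stirlingGap (x + n)) atTop (𝓝 (log (2 * π) / 2)) := by
  rw [← tendsto_add_atTop_iff_nat 1]
  have hlog := (tendsto_add_mul_log_one_add_div_atTop (x + 1) (x + 1 / 2)).comp
    tendsto_natCast_atTop_atTop
  have hlim := ((tendsto_log_factorial_sub_stirling.add
    (tendsto_log_Gamma_add_nat_sub_log_factorial hx)).sub hlog).add_const (x + 1)
  rw [add_zero, sub_add_cancel] at hlim
  refine hlim.congr' ?_
  filter_upwards [eventually_ne_atTop 0] with n hn
  have hn : (0 : ℝ) < n := by positivity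
  have hsplit : log (x + (n + 1)) = log n + log (1 + (x + 1) / n) := by
    rw [← log_mul hn.ne' (by positivity)]
    congr 1
    field_simp
    ring
  simp only [Function.comp_apply, stirlingGap, Nat.cast_add_one, hsplit]
  ring

lemma stirlingGap_mem_Icc {x : ℝ} (hx : 0 < x) :
    stirlingGap x ∈ Set.Icc (log (2 * π) / 2) (log (2 * π) / 2 + 1 / (12 * x)) := by
  have hpos (n : ℕ) : 0 < x + n := by positivity
  have hanti : Antitone fun n : ℕ => stirlingGap (x + n) :=
    antitone_nat_of_succ_le fun n => by
      simpa [add_assoc] using stirlingGap_add_one_le (hpos n)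
  have hmono : Monotone fun n : ℕ => stirlingGap (x + n) - 1 / (12 * (x + n)) :=
    monotone_nat_of_le_succ fun n => by
      have := stirlingGap_sub_stirlingGap_add_one_le (hpos n)
      rw [Nat.cast_add_one, ← add_assoc]
      linarith
  have hinv : Tendsto (fun n : ℕ => 1 / (12 * (x + n))) atTop (𝓝 0) := by
    refine tendsto_const_nhds.div_atTop (Tendsto.const_mul_atTop (by norm_num) ?_)
    exact tendsto_atTop_add_const_left _ x tendsto_natCast_atTop_atTop
  have hlim := tendsto_stirlingGap_add_nat hx
  constructor
  · simpa using hanti.le_of_tendsto hlim 0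
  · have := hmono.ge_of_tendsto (by simpa using hlim.sub hinv) 0
    simp only [Nat.cast_zero, add_zero] at this
    linarith

theorem stirling_two_sided (x : ℝ) (hx : 0 < x) :
    (2 * π) ^ ((1:ℝ)/2) * x ^ (x - 1/2) * Real.exp (-x) ≤ Real.Gamma x ∧
    Real.Gamma x ≤ (2 * π) ^ ((1:ℝ)/2) * Real.exp (1 / (12 * x)) * x ^ (x - 1/2) * Real.exp (-x) := by
  have hGamma : Gamma x = exp (stirlingGap x + ((x - 1 / 2) * log x - x)) := by
    rw [stirlingGap, sub_add_cancel, exp_log (Gamma_pos_of_pos hx)]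
  have hbound (c : ℝ) : (2 * π) ^ ((1:ℝ)/2) * exp c * x ^ (x - 1/2) * exp (-x) =
      exp (log (2 * π) / 2 + c + ((x - 1 / 2) * log x - x)) := by
    rw [rpow_def_of_pos (by positivity), rpow_def_of_pos hx, ← exp_add, ← exp_add, ← exp_add]
    ring_nf
  obtain ⟨hlower, hupper⟩ := stirlingGap_mem_Icc hx
  constructor
  · have h := hbound 0
    rw [exp_zero, mul_one, add_zero] at h
    rw [h, hGamma]
    exact exp_le_exp.mpr (by linarith)
  · rw [hbound, hGamma]
    exact exp_le_exp.mpr (by linarith)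
end

section
/- Let β, λ be positive reals with β > λ. Then Γ(β−λ)/Γ(β) ≤ e^{1/(12(β−λ))} · (β/(β−λ))^{1/2} · (β−λ)^{−λ}. -/
open Real

/-
Write `λ = n + s` with `n ∈ ℕ` and `0 ≤ s < 1`, and `a = β - λ`. Log-convexity of `Γ` between
`a + s` and `a + s + 1` gives Gautschi's inequality `a Γ(a) ≤ Γ(a + s) (a + s)^(1-s)`, and the
recurrence gives `(a + s)^n Γ(a + s) ≤ Γ(β)`, so `Γ(a)/Γ(β) ≤ ((a + s)/a)^(1-s) a^(-λ)`. Finally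
`((a + s)/a)^(1-s) = ((a + s)/a)^(1/2-s) ((a + s)/a)^(1/2)`, and `log(1 + s/a) ≤ s/a` together with
`s(1/2 - s) ≤ 1/16` bounds the first factor by `e^(1/(16a))`.
-/

namespace Real

theorem pow_mul_Gamma_le_Gamma_add_natCast {x : ℝ} (hx : 0 < x) (n : ℕ) :
    x ^ n * Gamma x ≤ Gamma (x + n) := by
  induction n with
  | zero => simp
  | succ n ih =>
    have hxn : 0 < x + n := by positivity
    rw [Nat.cast_succ, ← add_assoc, Gamma_add_one hxn.ne', pow_succ', mul_assoc]
    have := (Gamma_pos_of_pos hx).le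
    gcongr
    linarith [n.cast_nonneg (α := ℝ)]

/-- Gautschi's inequality. -/
theorem mul_Gamma_le_Gamma_add_mul_rpow {x s : ℝ} (hx : 0 < x) (hs0 : 0 ≤ s) (hs1 : s < 1) :
    x * Gamma x ≤ Gamma (x + s) * (x + s) ^ (1 - s) := by
  rcases hs0.eq_or_lt with rfl | hs0
  · simp [mul_comm]
  have hxs : 0 < x + s := by linarith
  have hΓ : 0 < Gamma (x + s) := Gamma_pos_of_pos hxs
  have hconv := Gamma_mul_add_mul_le_rpow_Gamma_mul_rpow_Gamma hxs (by linarith : 0 < x + s + 1)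
    hs0 (by linarith : 0 < 1 - s) (by ring)
  rw [show s * (x + s) + (1 - s) * (x + s + 1) = x + 1 by ring, Gamma_add_one hx.ne',
    Gamma_add_one hxs.ne', mul_rpow hxs.le hΓ.le] at hconv
  calc x * Gamma x ≤ Gamma (x + s) ^ s * ((x + s) ^ (1 - s) * Gamma (x + s) ^ (1 - s)) := hconv
    _ = Gamma (x + s) ^ (s + (1 - s)) * (x + s) ^ (1 - s) := by rw [rpow_add hΓ]; ring
    _ = Gamma (x + s) * (x + s) ^ (1 - s) := by rw [add_sub_cancel, rpow_one]

theorem Gamma_div_Gamma_add_le {x s : ℝ} (hx : 0 < x) (n : ℕ) (hs0 : 0 ≤ s) (hs1 : s < 1) :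
    Gamma x / Gamma (x + (n + s)) ≤ ((x + s) / x) ^ (1 - s) * x ^ (-(n + s)) := by
  have hxs : 0 < x + s := by linarith
  have hΓ : 0 < Gamma (x + (n + s)) := Gamma_pos_of_pos (by positivity)
  have hbound : x ^ (n + 1) * Gamma x ≤ Gamma (x + (n + s)) * (x + s) ^ (1 - s) :=
    calc x ^ (n + 1) * Gamma x = x ^ n * (x * Gamma x) := by ring
      _ ≤ (x + s) ^ n * (Gamma (x + s) * (x + s) ^ (1 - s)) := by
        exact mul_le_mul (pow_le_pow_left₀ hx.le (by linarith) n)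
          (mul_Gamma_le_Gamma_add_mul_rpow hx hs0 hs1) (by positivity) (by positivity)
      _ ≤ Gamma (x + s + n) * (x + s) ^ (1 - s) := by
        rw [← mul_assoc]
        gcongr
        exact pow_mul_Gamma_le_Gamma_add_natCast hxs n
      _ = Gamma (x + (n + s)) * (x + s) ^ (1 - s) := by ring_nf
  have hrpow : ((x + s) / x) ^ (1 - s) * x ^ (-(n + s)) = (x + s) ^ (1 - s) / x ^ (n + 1) := by
    have hexp : x ^ (-(n + s)) = x ^ (1 - s) / x ^ (n + 1) := by
      rw [← rpow_natCast, ← rpow_sub hx]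
      push_cast
      ring_nf
    rw [hexp, div_rpow hxs.le hx.le]
    field_simp
  rw [hrpow, div_le_div_iff₀ hΓ (by positivity)]
  linarith

theorem div_rpow_half_sub_le_exp {x s : ℝ} (hx : 0 < x) (hs : 0 ≤ s) :
    ((x + s) / x) ^ (1 / 2 - s) ≤ exp (1 / (16 * x)) := by
  have hbase : (x + s) / x = 1 + s / x := by field_simp
  rcases le_or_gt (1 / 2) s with hs2 | hs2
  · calc ((x + s) / x) ^ (1 / 2 - s) ≤ 1 :=
          rpow_le_one_of_one_le_of_nonpos (by rw [hbase]; linarith [div_nonneg hs hx.le])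
            (by linarith)
      _ ≤ exp (1 / (16 * x)) := one_le_exp (by positivity)
  calc ((x + s) / x) ^ (1 / 2 - s) ≤ exp (s / x) ^ (1 / 2 - s) := by
        rw [hbase, add_comm]
        exact rpow_le_rpow (by positivity) (add_one_le_exp _) (by linarith)
    _ = exp (s * (1 / 2 - s) / x) := by rw [← exp_mul]; ring_nf
    _ ≤ exp (1 / (16 * x)) := by
        rw [exp_le_exp, div_le_div_iff₀ hx (by positivity)]
        nlinarith [mul_nonneg (sq_nonneg (s - 1 / 4)) hx.le]

theorem div_rpow_one_sub_le_exp_mul_rpow_half {x s l : ℝ} (hx : 0 < x) (hs : 0 ≤ s)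
    (hsl : s ≤ l) :
    ((x + s) / x) ^ (1 - s) ≤ exp (1 / (12 * x)) * ((x + l) / x) ^ (1 / 2 : ℝ) := by
  have hbase : 0 < (x + s) / x := by positivity
  calc ((x + s) / x) ^ (1 - s) = ((x + s) / x) ^ (1 / 2 - s) * ((x + s) / x) ^ (1 / 2 : ℝ) := by
        rw [← rpow_add hbase]; ring_nf
    _ ≤ exp (1 / (16 * x)) * ((x + l) / x) ^ (1 / 2 : ℝ) := by
        gcongr
        exact div_rpow_half_sub_le_exp hx hs
    _ ≤ exp (1 / (12 * x)) * ((x + l) / x) ^ (1 / 2 : ℝ) := by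
        gcongr
        · exact rpow_nonneg (div_nonneg (by linarith) hx.le) _
        · norm_num

end Real

theorem gamma_ratio_upper (β lam : ℝ) (hlam : 0 < lam) (hβ : lam < β) :
    Real.Gamma (β - lam) / Real.Gamma β ≤
      Real.exp (1 / (12 * (β - lam))) * (β / (β - lam)) ^ ((1:ℝ)/2) * (β - lam) ^ (-lam) := by
  obtain ⟨a, ha, rfl⟩ : ∃ a, 0 < a ∧ β = a + lam := ⟨β - lam, by linarith, by ring⟩
  obtain ⟨n, s, hs0, hs1, rfl⟩ : ∃ (n : ℕ) (s : ℝ), 0 ≤ s ∧ s < 1 ∧ lam = n + s :=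
    ⟨⌊lam⌋₊, lam - ⌊lam⌋₊, by linarith [Nat.floor_le hlam.le],
      by linarith [Nat.lt_floor_add_one lam], by ring⟩
  rw [add_sub_cancel_right]
  calc Gamma a / Gamma (a + (n + s)) ≤ ((a + s) / a) ^ (1 - s) * a ^ (-(n + s)) :=
        Gamma_div_Gamma_add_le ha n hs0 hs1
    _ ≤ exp (1 / (12 * a)) * ((a + (n + s)) / a) ^ ((1:ℝ)/2) * a ^ (-(n + s)) := by
        gcongr
        exact div_rpow_one_sub_le_exp_mul_rpow_half ha hs0
          (by linarith [n.cast_nonneg (α := ℝ)])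
end

section
/- Let β, λ be positive reals with β > λ. Then Γ(β)/Γ(β−λ) ≤ e^{1/(12β)} · ((β−λ)/β)^{1/2} · β^{λ}. -/
open Real Filter Topology Set

/-!
Write `R t = log Γ(t) - (t - 1/2) log t + t` (`stirlingRemainder`), Binet's remainder in Stirling's
formula up to the constant `log √(2π)`. The bound follows from `R β ≤ R (β - λ)`, after
`log x ≤ x - 1` absorbs the remaining terms; the factor `exp (1 / (12 β))` is not even needed.

Monotonicity of `R` needs no asymptotics of `Γ`. The one-step decrement
`R t - R (t + 1) = (t + 1/2) log (1 + 1/t) - 1` is antitone, as its power series in `1 / (2t + 1)`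
shows, so `n ↦ R (y + n) - R (x + n)` is antitone for `y < x`. Its limit is `0`, because
log-convexity squeezes `log Γ (t + d) - log Γ t` between `d log (t - 1)` and `d log (t + d)`.
-/

theorem antitoneOn_Ioi_of_tendsto_sub_add {f : ℝ → ℝ} {a : ℝ}
    (hstep : AntitoneOn (fun t => f t - f (t + 1)) (Ioi a))
    (hlim : ∀ d > 0, Tendsto (fun t => f t - f (t + d)) atTop (𝓝 0)) :
    AntitoneOn f (Ioi a) := by
  intro y hy x _ hyx
  rcases hyx.eq_or_lt with rfl | hyx
  · rfl
  set G : ℕ → ℝ := fun n => f (y + n) - f (x + n)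
  have hG : Antitone G := by
    refine antitone_nat_of_succ_le fun n => ?_
    have hyn : y + n ∈ Ioi a := by
      simp only [mem_Ioi] at hy ⊢; linarith [n.cast_nonneg (α := ℝ)]
    have hxn : x + n ∈ Ioi a := by
      simp only [mem_Ioi] at hyn ⊢; linarith
    have := hstep hyn hxn (by linarith)
    simp only [G, Nat.cast_succ, ← add_assoc] at this ⊢
    linarith
  have hG_lim : Tendsto G atTop (𝓝 0) := by
    have hshift := tendsto_atTop_add_const_left _ y tendsto_natCast_atTop_atTop
    refine ((hlim _ (sub_pos.2 hyx)).comp hshift).congr fun n => ?_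
    simp only [G, Function.comp_apply]
    ring_nf
  simpa [G] using hG.le_of_tendsto hG_lim 0

theorem hasSum_add_half_mul_log_one_add_inv {a : ℝ} (ha : 0 < a) :
    HasSum (fun k : ℕ => 1 / (2 * (k : ℝ) + 1) * (1 / (2 * a + 1)) ^ (2 * k))
      ((a + 1 / 2) * log (1 + a⁻¹)) := by
  refine ((hasSum_log_one_add_inv ha).mul_left (a + 1 / 2)).congr_fun fun k => ?_
  have : 2 * a + 1 ≠ 0 := by positivity
  rw [pow_succ]
  field_simp

theorem antitoneOn_add_half_mul_log_one_add_inv :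
    AntitoneOn (fun a : ℝ => (a + 1 / 2) * log (1 + a⁻¹)) (Ioi 0) := by
  intro a ha b hb hab
  refine hasSum_le (fun k => ?_) (hasSum_add_half_mul_log_one_add_inv hb)
    (hasSum_add_half_mul_log_one_add_inv ha)
  have ha : (0 : ℝ) < a := ha
  have hb : (0 : ℝ) < b := hb
  gcongr

namespace Real

theorem log_Gamma_add_one {t : ℝ} (ht : 0 < t) : log (Gamma (t + 1)) = log (Gamma t) + log t := by
  rw [Gamma_add_one ht.ne', log_mul ht.ne' (Gamma_pos_of_pos ht).ne', add_comm]

theorem log_Gamma_sub_log_Gamma_le {p q : ℝ} (hp : 0 < p) (hpq : p < q) :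
    log (Gamma q) - log (Gamma p) ≤ (q - p) * log q := by
  have hq : 0 < q := hp.trans hpq
  have hslope := convexOn_log_Gamma.slope_mono_adjacent (mem_Ioi.2 hp)
    (mem_Ioi.2 (by linarith : 0 < q + 1)) hpq (lt_add_one q)
  simp only [Function.comp_apply, log_Gamma_add_one hq, add_sub_cancel_left, div_one] at hslope
  rwa [div_le_iff₀ (sub_pos.2 hpq), mul_comm] at hslope

theorem mul_log_sub_one_le_log_Gamma_sub_log_Gamma {p q : ℝ} (hp : 1 < p) (hpq : p < q) :
    (q - p) * log (p - 1) ≤ log (Gamma q) - log (Gamma p) := by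
  have hp₁ : 0 < p - 1 := by linarith
  have hslope := convexOn_log_Gamma.slope_mono_adjacent (mem_Ioi.2 hp₁)
    (mem_Ioi.2 (by linarith : 0 < q)) (sub_one_lt p) hpq
  have hΓ : log (Gamma p) = log (Gamma (p - 1)) + log (p - 1) := by
    simpa using log_Gamma_add_one hp₁
  simp only [Function.comp_apply] at hslope
  rw [hΓ, add_sub_cancel_left, sub_sub_cancel, div_one, le_div_iff₀ (sub_pos.2 hpq),
    mul_comm] at hslope
  rwa [hΓ]

noncomputable def stirlingRemainder (t : ℝ) : ℝ := log (Gamma t) - (t - 1 / 2) * log t + t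

theorem stirlingRemainder_sub_stirlingRemainder_add_one {t : ℝ} (ht : 0 < t) :
    stirlingRemainder t - stirlingRemainder (t + 1) = (t + 1 / 2) * log (1 + t⁻¹) - 1 := by
  have hlog : log (1 + t⁻¹) = log (t + 1) - log t := by
    rw [← log_div (by positivity) ht.ne', add_div, div_self ht.ne', one_div]
  rw [stirlingRemainder, stirlingRemainder, log_Gamma_add_one ht, hlog]
  ring

theorem tendsto_stirlingRemainder_sub_stirlingRemainder_add {d : ℝ} (hd : 0 < d) :
    Tendsto (fun t => stirlingRemainder t - stirlingRemainder (t + d)) atTop (𝓝 0) := by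
  set lower : ℝ → ℝ := fun t => (t - 1 / 2) * (log (t + d) - log t) - d
  set upper : ℝ → ℝ := fun t => lower t + d * (log (t + d) - log (t - 1))
  have h_lower : Tendsto lower atTop (𝓝 0) := by
    have h := ((tendsto_mul_log_one_add_div_atTop d).sub
      ((tendsto_log_comp_add_sub_log d).div_const 2)).sub_const d
    rw [zero_div, sub_zero, sub_self] at h
    refine h.congr' ?_
    filter_upwards [eventually_gt_atTop 0] with t ht
    rw [one_add_div ht.ne', log_div (by positivity) ht.ne']
    ring
  have h_upper : Tendsto upper atTop (𝓝 0) := by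
    have h := (tendsto_log_comp_add_sub_log (d + 1)).comp (tendsto_atTop_add_const_right _ (-1)
      tendsto_id)
    simpa [upper, sub_eq_add_neg, add_assoc] using h_lower.add (h.const_mul d)
  refine tendsto_of_tendsto_of_tendsto_of_le_of_le' h_lower h_upper ?_ ?_ <;>
    filter_upwards [eventually_gt_atTop 1] with t ht <;>
    simp only [lower, upper, stirlingRemainder]
  · linarith [log_Gamma_sub_log_Gamma_le (by linarith : 0 < t) (lt_add_of_pos_right t hd)]
  · linarith [mul_log_sub_one_le_log_Gamma_sub_log_Gamma ht (lt_add_of_pos_right t hd)]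

theorem antitoneOn_stirlingRemainder : AntitoneOn stirlingRemainder (Ioi 0) := by
  refine antitoneOn_Ioi_of_tendsto_sub_add (fun y hy x hx hyx => ?_)
    fun d hd => tendsto_stirlingRemainder_sub_stirlingRemainder_add hd
  simp only [stirlingRemainder_sub_stirlingRemainder_add_one hx,
    stirlingRemainder_sub_stirlingRemainder_add_one hy]
  linarith [antitoneOn_add_half_mul_log_one_add_inv hy hx hyx]

theorem log_Gamma_sub_log_Gamma_sub_le {β lam : ℝ} (hlam : 0 ≤ lam) (hβ : lam < β) :
    log (Gamma β) - log (Gamma (β - lam)) ≤ lam * log β + (log (β - lam) - log β) / 2 := by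
  have hβlam : 0 < β - lam := sub_pos.2 hβ
  have hR := antitoneOn_stirlingRemainder (mem_Ioi.2 hβlam) (mem_Ioi.2 (by linarith))
    (sub_le_self β hlam)
  have hlog : log β - log (β - lam) ≤ lam / (β - lam) := by
    rw [← log_div (by linarith) hβlam.ne']
    calc log (β / (β - lam)) ≤ β / (β - lam) - 1 :=
          log_le_sub_one_of_pos (div_pos (by linarith) hβlam)
      _ = lam / (β - lam) := by field_simp; ring
  have hmul : (β - lam) * (log β - log (β - lam)) ≤ lam := by
    rwa [le_div_iff₀ hβlam, mul_comm] at hlog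
  simp only [stirlingRemainder] at hR
  linarith

theorem Gamma_div_Gamma_sub_le {β lam : ℝ} (hlam : 0 ≤ lam) (hβ : lam < β) :
    Gamma β / Gamma (β - lam) ≤ ((β - lam) / β) ^ ((1 : ℝ) / 2) * β ^ lam := by
  have hβ₀ : 0 < β := hlam.trans_lt hβ
  have hβlam : 0 < β - lam := sub_pos.2 hβ
  rw [← exp_log (div_pos (Gamma_pos_of_pos hβ₀) (Gamma_pos_of_pos hβlam)),
    rpow_def_of_pos (div_pos hβlam hβ₀), rpow_def_of_pos hβ₀, ← exp_add, exp_le_exp,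
    log_div (Gamma_pos_of_pos hβ₀).ne' (Gamma_pos_of_pos hβlam).ne', log_div hβlam.ne' hβ₀.ne']
  linarith [log_Gamma_sub_log_Gamma_sub_le hlam hβ]

end Real

theorem gamma_ratio_upper' (β lam : ℝ) (hlam : 0 < lam) (hβ : lam < β) :
    Real.Gamma β / Real.Gamma (β - lam) ≤
      Real.exp (1 / (12 * β)) * ((β - lam) / β) ^ ((1:ℝ)/2) * β ^ lam := by
  have hβ₀ : 0 < β := hlam.trans hβ
  rw [mul_assoc]
  exact (Real.Gamma_div_Gamma_sub_le hlam.le hβ).trans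
    (le_mul_of_one_le_left (by positivity) (one_le_exp (by positivity)))
end

section
/- Fix α ∈ (0,1) and θ > −α. Define φ_n := Γ(1+θ)Γ(n+α+θ) / (Γ(1+θ+α)Γ(n+θ)) for n ≥ 1. Then for all integers j ≥ 1, 1/φ_j ≤ 2Γ(1+θ+α)/(Γ(1+θ)·(j+θ)^α). -/
open Real

noncomputable def phi (α θ : ℝ) (n : ℕ) : ℝ :=
  Real.Gamma (1 + θ) * Real.Gamma ((n : ℝ) + α + θ) /
    (Real.Gamma (1 + θ + α) * Real.Gamma ((n : ℝ) + θ))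

/-!
Log-convexity of `Γ` between `x + α` and `x + α + 1` gives `Γ(x + 1) ≤ Γ(x + α) (x + α)^(1 - α)`,
i.e. the lower half of Wendel's inequality `Γ(x) x^α ≤ Γ(x + α) (1 + α / x)^(1 - α)`. By Bernoulli's
inequality the last factor is at most `1 + α (1 - α) / x`, which is `≤ 1 + α < 2` as soon as
`x = j + θ ≥ 1 - α`.
-/

namespace Real

theorem Gamma_add_one_le_Gamma_add_mul_rpow {x s : ℝ} (hxs : 0 < x + s) (hs0 : 0 < s)
    (hs1 : s < 1) : Gamma (x + 1) ≤ Gamma (x + s) * (x + s) ^ (1 - s) := by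
  have hΓ : 0 < Gamma (x + s) := Gamma_pos_of_pos hxs
  -- `x + 1` is the convex combination `s • (x + s) + (1 - s) • (x + s + 1)`
  have hconv := Gamma_mul_add_mul_le_rpow_Gamma_mul_rpow_Gamma hxs (by linarith : 0 < x + s + 1)
    hs0 (sub_pos.2 hs1) (add_sub_cancel s 1)
  rwa [show s * (x + s) + (1 - s) * (x + s + 1) = x + 1 by ring, Gamma_add_one hxs.ne',
    mul_rpow hxs.le hΓ.le, mul_left_comm, ← rpow_add hΓ, add_sub_cancel, rpow_one, mul_comm] at hconv

theorem Gamma_mul_rpow_le_Gamma_add_mul_one_add_div_rpow {x s : ℝ} (hx : 0 < x) (hs0 : 0 < s)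
    (hs1 : s < 1) : Gamma x * x ^ s ≤ Gamma (x + s) * (1 + s / x) ^ (1 - s) := by
  have hxs : 0 < x + s := by linarith
  calc Gamma x * x ^ s = Gamma (x + 1) / x ^ (1 - s) := by
        rw [Gamma_add_one hx.ne', eq_div_iff (rpow_pos_of_pos hx _).ne', mul_assoc,
          ← rpow_add hx, add_sub_cancel, rpow_one, mul_comm]
    _ ≤ Gamma (x + s) * (x + s) ^ (1 - s) / x ^ (1 - s) := by
        gcongr
        exact Gamma_add_one_le_Gamma_add_mul_rpow hxs hs0 hs1
    _ = Gamma (x + s) * (1 + s / x) ^ (1 - s) := by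
        rw [mul_div_assoc, ← div_rpow hxs.le hx.le, add_div, div_self hx.ne']

theorem Gamma_mul_rpow_le_one_add_mul_Gamma_add {x s : ℝ} (hx : 1 - s ≤ x) (hs0 : 0 < s)
    (hs1 : s < 1) : Gamma x * x ^ s ≤ (1 + s) * Gamma (x + s) := by
  have hx0 : 0 < x := by linarith
  have hbern : (1 + s / x) ^ (1 - s) ≤ 1 + (1 - s) * (s / x) :=
    rpow_one_add_le_one_add_mul_self (by have := div_pos hs0 hx0; linarith) (by linarith)
      (by linarith)
  have hsmall : (1 - s) * (s / x) ≤ s := by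
    rw [← mul_div_assoc, div_le_iff₀ hx0]
    nlinarith
  calc Gamma x * x ^ s ≤ Gamma (x + s) * (1 + s / x) ^ (1 - s) :=
        Gamma_mul_rpow_le_Gamma_add_mul_one_add_div_rpow hx0 hs0 hs1
    _ ≤ Gamma (x + s) * (1 + s) :=
        mul_le_mul_of_nonneg_left (by linarith) (Gamma_pos_of_pos (by linarith)).le
    _ = (1 + s) * Gamma (x + s) := mul_comm _ _

end Real

theorem one_div_phi_le (α θ : ℝ) (hα0 : 0 < α) (hα1 : α < 1) (hθ : -α < θ)
    (j : ℕ) (hj : 1 ≤ j) :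
    1 / phi α θ j ≤ 2 * Real.Gamma (1 + θ + α) / (Real.Gamma (1 + θ) * ((j : ℝ) + θ) ^ α) := by
  have hj1 : (1 : ℝ) ≤ j := by exact_mod_cast hj
  set x : ℝ := (j : ℝ) + θ
  have hx : 1 - α < x := by linarith
  have hΓθ : 0 < Gamma (1 + θ) := Gamma_pos_of_pos (by linarith)
  have hΓθα : 0 < Gamma (1 + θ + α) := Gamma_pos_of_pos (by linarith)
  have hΓxα : 0 < Gamma (x + α) := Gamma_pos_of_pos (by linarith)
  have hΓ : Gamma x * x ^ α ≤ 2 * Gamma (x + α) :=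
    (Gamma_mul_rpow_le_one_add_mul_Gamma_add hx.le hα0 hα1).trans
      (mul_le_mul_of_nonneg_right (by linarith) hΓxα.le)
  have hxα : 0 < x ^ α := rpow_pos_of_pos (by linarith) α
  rw [phi, show (j : ℝ) + α + θ = x + α by ring, one_div_div,
    div_le_div_iff₀ (mul_pos hΓθ hΓxα) (mul_pos hΓθ hxα)]
  calc Gamma (1 + θ + α) * Gamma x * (Gamma (1 + θ) * x ^ α)
      = Gamma (1 + θ) * Gamma (1 + θ + α) * (Gamma x * x ^ α) := by ring
    _ ≤ Gamma (1 + θ) * Gamma (1 + θ + α) * (2 * Gamma (x + α)) := by gcongr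
    _ = 2 * Gamma (1 + θ + α) * (Gamma (1 + θ) * Gamma (x + α)) := by ring
end

section
/- Fix α ∈ (0,1) and θ > −α. For integers 1 ≤ k and n with n ≥ 2k, define ψ_n(k) := Γ(k+θ)Γ(n−k+α+θ)/(Γ(α+θ)Γ(n+θ)). Then ψ_n(k) ≤ 2Γ(k+θ)/(Γ(α+θ)·(n+θ−k+α)^{k−α}). -/
open Real

noncomputable def psi (α θ : ℝ) (n k : ℕ) : ℝ :=
  Real.Gamma ((k : ℝ) + θ) * Real.Gamma ((n : ℝ) - k + α + θ) /
    (Real.Gamma (α + θ) * Real.Gamma ((n : ℝ) + θ))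

lemma gamma_add_nat_ge (x : ℝ) (hx : 0 < x) (m : ℕ) :
    x ^ m * Real.Gamma x ≤ Real.Gamma (x + m) := by
  induction m with
  | zero => simp
  | succ m ih =>
    have hxm : (0:ℝ) < x + m := by positivity
    have h1 : Real.Gamma (x + (m+1 : ℕ)) = (x + m) * Real.Gamma (x + m) := by
      push_cast
      rw [show x + ((m:ℝ) + 1) = (x + m) + 1 by ring, Real.Gamma_add_one hxm.ne']
    rw [h1, pow_succ]
    calc x ^ m * x * Real.Gamma x = x * (x ^ m * Real.Gamma x) := by ring
    _ ≤ x * Real.Gamma (x + m) := by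
        exact mul_le_mul_of_nonneg_left ih hx.le
    _ ≤ (x + m) * Real.Gamma (x + m) := by
        have := Real.Gamma_pos_of_pos hxm
        nlinarith [Real.Gamma_pos_of_pos hxm]

theorem psi_upper (α θ : ℝ) (hα0 : 0 < α) (hα1 : α < 1) (hθ : -α < θ)
    (k n : ℕ) (hk : 1 ≤ k) (hn : 2 * k ≤ n) :
    psi α θ n k ≤
      2 * Real.Gamma ((k : ℝ) + θ) /
        (Real.Gamma (α + θ) * ((n : ℝ) + θ - k + α) ^ ((k : ℝ) - α)) := by
  set x : ℝ := (n : ℝ) - k + α + θ with hxdef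
  have hkn : (2 * k : ℝ) ≤ n := by exact_mod_cast hn
  have hk1 : (1 : ℝ) ≤ k := by exact_mod_cast hk
  have hxk : (k : ℝ) < x := by
    simp only [hxdef]; push_cast at hkn ⊢; linarith
  have hx : (0 : ℝ) < x := lt_of_le_of_lt (by positivity) hxk
  have hxα : (0 : ℝ) < x + k - α := by linarith
  -- log-convexity step: Γ(x+k) ≤ Γ(x+k-α) * (x+k-α)^α
  have hconv : Real.Gamma (x + k) ≤ Real.Gamma (x + k - α) * (x + k - α) ^ α := by
    have h1 : (0:ℝ) < x + k - α := hxα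
    have h2 : (0:ℝ) < x + k + 1 - α := by linarith
    have hcomb : (1 - α) * (x + k - α) + α * (x + k + 1 - α) = x + k := by ring
    have := Real.Gamma_mul_add_mul_le_rpow_Gamma_mul_rpow_Gamma h1 h2
      (by linarith : (0:ℝ) < 1 - α) hα0 (by ring)
    rw [hcomb] at this
    have hrec : Real.Gamma (x + k + 1 - α) = (x + k - α) * Real.Gamma (x + k - α) := by
      rw [show x + k + 1 - α = (x + k - α) + 1 by ring, Real.Gamma_add_one h1.ne']
    rw [hrec] at this
    have hG : (0:ℝ) < Real.Gamma (x + k - α) := Real.Gamma_pos_of_pos h1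
    calc Real.Gamma (x + k)
        ≤ Real.Gamma (x + k - α) ^ (1 - α) * ((x + k - α) * Real.Gamma (x + k - α)) ^ α := this
      _ = Real.Gamma (x + k - α) * (x + k - α) ^ α := by
          rw [Real.mul_rpow h1.le hG.le]
          rw [show Real.Gamma (x+k-α) ^ (1-α) * ((x+k-α)^α * Real.Gamma (x+k-α)^α)
              = (x+k-α)^α * (Real.Gamma (x+k-α) ^ (1-α) * Real.Gamma (x+k-α)^α) by ring]
          rw [← Real.rpow_add hG]
          norm_num [mul_comm]
  -- step: Γ(x+k) ≥ x^k Γ x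
  have hpow : x ^ k * Real.Gamma x ≤ Real.Gamma (x + k) := gamma_add_nat_ge x hx k
  -- step: (x+k-α)^α ≤ 2 * x^α
  have hsmall : (x + k - α) ^ α ≤ 2 * x ^ α := by
    have h1 : x + k - α ≤ 2 * x := by linarith
    have h2 : (x + k - α) ^ α ≤ (2 * x) ^ α :=
      Real.rpow_le_rpow hxα.le h1 hα0.le
    have h3 : (2 * x) ^ α = 2 ^ α * x ^ α := Real.mul_rpow (by norm_num) hx.le
    have h4 : (2:ℝ) ^ α ≤ 2 := by
      calc (2:ℝ) ^ α ≤ (2:ℝ) ^ (1:ℝ) :=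
        Real.rpow_le_rpow_of_exponent_le (by norm_num) hα1.le
      _ = 2 := Real.rpow_one 2
    have hxα' : (0:ℝ) ≤ x ^ α := (Real.rpow_pos_of_pos hx α).le
    nlinarith
  -- combine: Γ(x + k - α) ≥ (1/2) x^(k-α) Γ x
  have hGx : (0:ℝ) < Real.Gamma x := Real.Gamma_pos_of_pos hx
  have hGxa : (0:ℝ) < Real.Gamma (x + k - α) := Real.Gamma_pos_of_pos hxα
  have hxa_pos : (0:ℝ) < x ^ α := Real.rpow_pos_of_pos hx α
  have hkey : x ^ ((k:ℝ) - α) * Real.Gamma x ≤ 2 * Real.Gamma (x + k - α) := by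
    have hsplit : x ^ ((k:ℝ) - α) * x ^ α = x ^ k := by
      rw [← Real.rpow_add hx, sub_add_cancel, Real.rpow_natCast]
    have h1 : x ^ ((k:ℝ) - α) * x ^ α * Real.Gamma x ≤
        Real.Gamma (x + k - α) * (x + k - α) ^ α := by
      rw [hsplit]; exact hpow.trans hconv
    have h2 : Real.Gamma (x + k - α) * (x + k - α) ^ α ≤
        Real.Gamma (x + k - α) * (2 * x ^ α) :=
      mul_le_mul_of_nonneg_left hsmall hGxa.le
    have hxka : (0:ℝ) < x ^ ((k:ℝ) - α) := Real.rpow_pos_of_pos hx _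
    nlinarith [h1.trans h2]
  -- finish
  have hGkθ : (0:ℝ) < Real.Gamma ((k:ℝ) + θ) :=
    Real.Gamma_pos_of_pos (by linarith)
  have hGαθ : (0:ℝ) < Real.Gamma (α + θ) :=
    Real.Gamma_pos_of_pos (by linarith)
  have hxeq : (n : ℝ) + θ - k + α = x := by simp only [hxdef]; ring
  have hGn : Real.Gamma ((n:ℝ) + θ) = Real.Gamma (x + k - α) := by
    rw [show x + k - α = (n:ℝ) + θ by simp only [hxdef]; ring]
  rw [psi, hxeq, hGn]
  rw [div_le_div_iff₀ (by positivity) (by positivity)]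
  have hxka : (0:ℝ) < x ^ ((k:ℝ) - α) := Real.rpow_pos_of_pos hx _
  calc Real.Gamma ((k:ℝ) + θ) * Real.Gamma x * (Real.Gamma (α + θ) * x ^ ((k:ℝ) - α))
      = (Real.Gamma ((k:ℝ) + θ) * Real.Gamma (α + θ)) * (x ^ ((k:ℝ) - α) * Real.Gamma x) := by
        ring
    _ ≤ (Real.Gamma ((k:ℝ) + θ) * Real.Gamma (α + θ)) * (2 * Real.Gamma (x + k - α)) := by
        exact mul_le_mul_of_nonneg_left hkey (by positivity)
    _ = 2 * Real.Gamma ((k:ℝ) + θ) * (Real.Gamma (α + θ) * Real.Gamma (x + k - α)) := by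
        ring
end

section
/- Fix α ∈ (0,1) and θ > −α. For integers 1 ≤ k ≤ n, define ψ_n(k) := Γ(k+θ)Γ(n−k+α+θ)/(Γ(α+θ)Γ(n+θ)). Then 1/ψ_n(k) ≤ e^{1/12} Γ(α+θ)/Γ(k+θ) · (n+θ)^{k−α}. -/
open Real

lemma gamma_add_le (x s : ℝ) (hx : 0 < x) (hs : 0 < s) (hs1 : s < 1) :
    Real.Gamma (x + s) ≤ Real.Gamma x * x ^ s := by
  have h := Real.Gamma_mul_add_mul_le_rpow_Gamma_mul_rpow_Gamma hx (by linarith : (0:ℝ) < x + 1)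
    (by linarith : (0:ℝ) < 1 - s) hs (by ring)
  have hre : (1 - s) * x + s * (x + 1) = x + s := by ring
  rw [hre, Real.Gamma_add_one hx.ne'] at h
  calc Real.Gamma (x + s) ≤ Real.Gamma x ^ (1 - s) * (x * Real.Gamma x) ^ s := h
    _ = Real.Gamma x * x ^ s := by
        rw [Real.mul_rpow hx.le (Real.Gamma_pos_of_pos hx).le, mul_comm (x ^ s),
          ← mul_assoc, ← Real.rpow_add (Real.Gamma_pos_of_pos hx)]
        norm_num

lemma key (α θ : ℝ) (hα0 : 0 < α) (hα1 : α < 1) (hθ : -α < θ) :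
    ∀ n k : ℕ, 1 ≤ k → k ≤ n →
      Real.Gamma ((n : ℝ) + θ) ≤
        Real.Gamma ((n : ℝ) - k + α + θ) * ((n : ℝ) + θ) ^ ((k : ℝ) - α) := by
  intro n k
  induction k with
  | zero => intro h; omega
  | succ k ih =>
    intro _ hkn
    have hnθ : 0 < (n : ℝ) + θ := by
      have : (1:ℝ) ≤ n := by exact_mod_cast Nat.one_le_iff_ne_zero.mpr (by omega)
      linarith
    rcases Nat.eq_zero_or_pos k with hk0 | hk1
    · subst hk0
      -- base case k = 1
      have hx : 0 < (n : ℝ) - 1 + α + θ := by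
        have : (1:ℝ) ≤ n := by exact_mod_cast hkn
        linarith
      have h1 : Real.Gamma ((n:ℝ) + θ) ≤
          Real.Gamma ((n:ℝ) - 1 + α + θ) * ((n:ℝ) - 1 + α + θ) ^ (1 - α) := by
        have := gamma_add_le ((n:ℝ) - 1 + α + θ) (1 - α) hx (by linarith) (by linarith)
        have hre : (n:ℝ) - 1 + α + θ + (1 - α) = (n:ℝ) + θ := by ring
        rwa [hre] at this
      have h2 : ((n:ℝ) - 1 + α + θ) ^ (1 - α) ≤ ((n:ℝ) + θ) ^ (1 - α) :=
        Real.rpow_le_rpow hx.le (by linarith) (by linarith)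
      push_cast
      exact le_trans h1 (mul_le_mul_of_nonneg_left h2 (Real.Gamma_pos_of_pos hx).le)
    · -- inductive step
      have hkn' : k ≤ n := by omega
      have hprev := ih hk1 hkn'
      have hx : 0 < (n : ℝ) - (k + 1) + α + θ := by
        have : ((k:ℝ) + 1) ≤ n := by exact_mod_cast hkn
        linarith
      have hsplit : Real.Gamma ((n:ℝ) - k + α + θ) =
          ((n:ℝ) - (k+1) + α + θ) * Real.Gamma ((n:ℝ) - (k+1) + α + θ) := by
        have := Real.Gamma_add_one hx.ne'
        have hre : (n:ℝ) - (k+1) + α + θ + 1 = (n:ℝ) - k + α + θ := by ring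
        rw [hre] at this; exact this
      have hle : ((n:ℝ) - (k+1) + α + θ) ≤ (n:ℝ) + θ := by
        have : (0:ℝ) ≤ (k:ℝ) := Nat.cast_nonneg k
        linarith
      have hpow : ((n:ℝ) + θ) ^ ((k:ℝ) - α) * ((n:ℝ) + θ)
          = ((n:ℝ) + θ) ^ (((k:ℕ)+1 : ℝ) - α) := by
        rw [show (((k:ℕ)+1 : ℝ)) - α = ((k:ℝ) - α) + 1 by push_cast; ring,
          Real.rpow_add hnθ, Real.rpow_one]
      calc Real.Gamma ((n:ℝ) + θ)
          ≤ Real.Gamma ((n:ℝ) - k + α + θ) * ((n:ℝ) + θ) ^ ((k:ℝ) - α) := hprev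
        _ = ((n:ℝ) - (k+1) + α + θ) * Real.Gamma ((n:ℝ) - (k+1) + α + θ)
              * ((n:ℝ) + θ) ^ ((k:ℝ) - α) := by rw [hsplit]
        _ ≤ ((n:ℝ) + θ) * Real.Gamma ((n:ℝ) - (k+1) + α + θ)
              * ((n:ℝ) + θ) ^ ((k:ℝ) - α) := by
            exact mul_le_mul_of_nonneg_right
              (mul_le_mul_of_nonneg_right hle (Real.Gamma_pos_of_pos hx).le)
              (Real.rpow_pos_of_pos hnθ ((k:ℝ) - α)).le
        _ = Real.Gamma ((n:ℝ) - (k+1) + α + θ)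
              * (((n:ℝ) + θ) ^ ((k:ℝ) - α) * ((n:ℝ) + θ)) := by ring
        _ = Real.Gamma ((n:ℝ) - ((k:ℕ)+1 : ℕ) + α + θ)
              * ((n:ℝ) + θ) ^ ((((k:ℕ)+1 : ℕ) : ℝ) - α) := by
            rw [hpow]; push_cast; ring_nf

theorem one_div_psi_upper (α θ : ℝ) (hα0 : 0 < α) (hα1 : α < 1) (hθ : -α < θ)
    (k n : ℕ) (hk : 1 ≤ k) (hkn : k ≤ n) :
    1 / psi α θ n k ≤
      Real.exp (1 / 12) * Real.Gamma (α + θ) / Real.Gamma ((k : ℝ) + θ) *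
        ((n : ℝ) + θ) ^ ((k : ℝ) - α) := by
  have hαθ : 0 < α + θ := by linarith
  have hkθ : 0 < (k : ℝ) + θ := by
    have : (1:ℝ) ≤ k := by exact_mod_cast hk
    linarith
  have hnθ : 0 < (n : ℝ) + θ := by
    have : (1:ℝ) ≤ n := by exact_mod_cast le_trans hk hkn
    linarith
  have hx : 0 < (n : ℝ) - k + α + θ := by
    have : (k:ℝ) ≤ n := by exact_mod_cast hkn
    linarith
  have hG1 := Real.Gamma_pos_of_pos hkθ
  have hG2 := Real.Gamma_pos_of_pos hx
  have hG3 := Real.Gamma_pos_of_pos hαθ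
  have hG4 := Real.Gamma_pos_of_pos hnθ
  have hkey := key α θ hα0 hα1 hθ n k hk hkn
  have hpsi : psi α θ n k = Real.Gamma ((k : ℝ) + θ) * Real.Gamma ((n : ℝ) - k + α + θ) /
      (Real.Gamma (α + θ) * Real.Gamma ((n : ℝ) + θ)) := rfl
  rw [hpsi, one_div_div]
  have hexp : (1:ℝ) ≤ Real.exp (1/12) := by
    rw [← Real.exp_zero]; exact Real.exp_le_exp.mpr (by norm_num)
  have hp := Real.rpow_pos_of_pos hnθ ((k:ℝ) - α)
  rw [div_le_iff₀ (by positivity)]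
  have hrhs : Real.exp (1 / 12) * Real.Gamma (α + θ) / Real.Gamma ((k : ℝ) + θ) *
        ((n : ℝ) + θ) ^ ((k : ℝ) - α) * (Real.Gamma ((k:ℝ) + θ) * Real.Gamma ((n:ℝ) - k + α + θ))
      = Real.exp (1/12) * Real.Gamma (α + θ) *
        (Real.Gamma ((n:ℝ) - k + α + θ) * ((n : ℝ) + θ) ^ ((k : ℝ) - α)) := by
    field_simp
  rw [hrhs]
  calc Real.Gamma (α + θ) * Real.Gamma ((n:ℝ) + θ)
      ≤ Real.Gamma (α + θ) * (Real.Gamma ((n:ℝ) - k + α + θ) * ((n:ℝ) + θ) ^ ((k:ℝ) - α)) :=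
        mul_le_mul_of_nonneg_left hkey hG3.le
    _ ≤ Real.exp (1/12) * Real.Gamma (α + θ) *
        (Real.Gamma ((n:ℝ) - k + α + θ) * ((n:ℝ) + θ) ^ ((k:ℝ) - α)) := by
        have hA : (0:ℝ) ≤ Real.Gamma (α + θ) *
            (Real.Gamma ((n:ℝ) - k + α + θ) * ((n:ℝ) + θ) ^ ((k:ℝ) - α)) := by positivity
        nlinarith [mul_le_mul_of_nonneg_right hexp hA]
end

section
/- For all integers j ≥ 1 and real α ∈ (0,1), Γ(j − α/2 + 1)/Γ(j − α) ≤ e^{1/12} j^{1+α/2}. -/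
open Real

theorem gamma_ratio_j (j : ℕ) (hj : 1 ≤ j) (α : ℝ) (hα0 : 0 < α) (hα1 : α < 1) :
    Real.Gamma ((j : ℝ) - α / 2 + 1) / Real.Gamma ((j : ℝ) - α) ≤
      Real.exp (1 / 12) * (j : ℝ) ^ (1 + α / 2) := by
  set x : ℝ := (j : ℝ) - α with hxdef
  set s : ℝ := α / 2 with hsdef
  have hj1 : (1 : ℝ) ≤ (j : ℝ) := by exact_mod_cast hj
  have hx : 0 < x := by simp only [hxdef]; linarith
  have hs0 : 0 < s := by positivity
  have hs1 : s < 1 := by simp only [hsdef]; linarith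
  have hΓx : 0 < Real.Gamma x := Real.Gamma_pos_of_pos hx
  -- log-convexity gives Γ(x+s) ≤ Γ(x) * x^s
  have hconv := Real.convexOn_log_Gamma.2 (Set.mem_Ioi.mpr hx)
    (Set.mem_Ioi.mpr (by linarith : (0:ℝ) < x + 1))
    (by linarith : (0:ℝ) ≤ 1 - s) (le_of_lt hs0) (by ring)
  have hcomb : (1 - s) • x + s • (x + 1) = x + s := by
    simp [smul_eq_mul]; ring
  rw [hcomb] at hconv
  have hΓx1 : Real.Gamma (x + 1) = x * Real.Gamma x := Real.Gamma_add_one (ne_of_gt hx)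
  have hkey : Real.Gamma (x + s) ≤ Real.Gamma x * x ^ s := by
    have hΓxs : 0 < Real.Gamma (x + s) := Real.Gamma_pos_of_pos (by linarith)
    have hrhs : 0 < Real.Gamma x * x ^ s := by positivity
    rw [← Real.log_le_log_iff hΓxs hrhs]
    have : Real.log (Real.Gamma x * x ^ s)
        = Real.log (Real.Gamma x) + s * Real.log x := by
      rw [Real.log_mul (ne_of_gt hΓx) (ne_of_gt (Real.rpow_pos_of_pos hx s)),
        Real.log_rpow hx]
    rw [this]
    calc Real.log (Real.Gamma (x + s))
        ≤ (1 - s) * Real.log (Real.Gamma x) + s * Real.log (Real.Gamma (x + 1)) := hconv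
      _ = Real.log (Real.Gamma x) + s * Real.log x := by
          rw [hΓx1, Real.log_mul (ne_of_gt hx) (ne_of_gt hΓx)]; ring
  -- rewrite the numerator
  have hnum : (j : ℝ) - α / 2 + 1 = (x + s) + 1 := by
    simp only [hxdef, hsdef]; ring
  have hΓnum : Real.Gamma ((j : ℝ) - α / 2 + 1) = (x + s) * Real.Gamma (x + s) := by
    rw [hnum, Real.Gamma_add_one (by positivity : x + s ≠ 0)]
  rw [hΓnum]
  have hxs_le_j : x + s ≤ (j : ℝ) := by simp only [hxdef, hsdef]; linarith
  have hx_le_j : x ≤ (j : ℝ) := by simp only [hxdef]; linarith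
  have hjpos : (0 : ℝ) < (j : ℝ) := by linarith
  have hxpow : x ^ s ≤ (j : ℝ) ^ s :=
    Real.rpow_le_rpow (le_of_lt hx) hx_le_j (le_of_lt hs0)
  have hmain : (x + s) * Real.Gamma (x + s) / Real.Gamma x ≤ (j : ℝ) ^ (1 + s) := by
    rw [div_le_iff₀ hΓx]
    have h1 : (x + s) * Real.Gamma (x + s) ≤ (x + s) * (Real.Gamma x * x ^ s) :=
      mul_le_mul_of_nonneg_left hkey (by positivity)
    have h2 : (x + s) * (Real.Gamma x * x ^ s) ≤ (j : ℝ) * (Real.Gamma x * (j:ℝ) ^ s) := by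
      apply mul_le_mul hxs_le_j (mul_le_mul_of_nonneg_left hxpow (le_of_lt hΓx))
        (by positivity) (le_of_lt hjpos)
    have h3 : (j : ℝ) * (Real.Gamma x * (j:ℝ) ^ s) = (j : ℝ) ^ (1 + s) * Real.Gamma x := by
      rw [Real.rpow_add hjpos, Real.rpow_one]; ring
    linarith
  calc (x + s) * Real.Gamma (x + s) / Real.Gamma x
      ≤ (j : ℝ) ^ (1 + s) := hmain
    _ ≤ Real.exp (1 / 12) * (j : ℝ) ^ (1 + α / 2) := by
        rw [hsdef]
        nlinarith [Real.one_le_exp (by norm_num : (0:ℝ) ≤ 1/12),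
          Real.rpow_pos_of_pos hjpos (1 + α / 2)]
end

section
/- Fix real α, θ with α ∈ (0,1), θ > −α. For all integers n ≥ 1 and k with 1 ≤ k ≤ n/2, |Γ(n−k+α+θ)/Γ(n+θ) · n^{k−α} − 1| ≤ C k^2 / (n−k), where C is a constant depending only on α and θ. -/
set_option maxHeartbeats 1000000

open Real

lemma gamma_prod (x : ℝ) (hx : 0 < x) (m : ℕ) :
    Real.Gamma (x + m) = Real.Gamma x * ∏ j ∈ Finset.range m, (x + j) := by
  induction m with
  | zero => simp
  | succ m ih =>
      have hxm : x + (m : ℝ) ≠ 0 := by positivity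
      have h : x + ((m + 1 : ℕ) : ℝ) = (x + m) + 1 := by push_cast; ring
      rw [h, Real.Gamma_add_one hxm, ih, Finset.prod_range_succ]
      ring

lemma gautschi_low {α x : ℝ} (h0 : 0 < α) (h1 : α < 1) (hx : 0 < x) :
    (1 - α) * Real.log x ≤ Real.log (Real.Gamma (x + 1)) - Real.log (Real.Gamma (x + α)) := by
  have hc := Real.convexOn_log_Gamma.2 (Set.mem_Ioi.2 hx)
    (Set.mem_Ioi.2 (by linarith : (0:ℝ) < x + 1)) (by linarith : (0:ℝ) ≤ 1 - α) h0.le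
    (by ring)
  have heq : (1 - α) • x + α • (x + 1) = x + α := by simp [smul_eq_mul]; ring
  rw [heq] at hc
  simp only [Function.comp_apply, smul_eq_mul] at hc
  have hlog : Real.log (Real.Gamma (x + 1)) = Real.log x + Real.log (Real.Gamma x) := by
    rw [Real.Gamma_add_one hx.ne', Real.log_mul hx.ne' (Real.Gamma_pos_of_pos hx).ne']
  nlinarith [hc, hlog]

lemma gautschi_high {α x : ℝ} (h0 : 0 < α) (h1 : α < 1) (hx : 0 < x) :
    Real.log (Real.Gamma (x + 1)) - Real.log (Real.Gamma (x + α)) ≤ (1 - α) * Real.log (x + α) := by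
  have hxα : (0:ℝ) < x + α := by linarith
  have hc := Real.convexOn_log_Gamma.2 (Set.mem_Ioi.2 hxα)
    (Set.mem_Ioi.2 (by linarith : (0:ℝ) < x + α + 1)) h0.le (by linarith : (0:ℝ) ≤ 1 - α)
    (by ring)
  have heq : α • (x + α) + (1 - α) • (x + α + 1) = x + 1 := by simp [smul_eq_mul]; ring
  rw [heq] at hc
  simp only [Function.comp_apply, smul_eq_mul] at hc
  have hlog : Real.log (Real.Gamma (x + α + 1))
      = Real.log (x + α) + Real.log (Real.Gamma (x + α)) := by
    rw [Real.Gamma_add_one hxα.ne', Real.log_mul hxα.ne' (Real.Gamma_pos_of_pos hxα).ne']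
  nlinarith [hc, hlog]

lemma abs_log_sub_log_le {a b c : ℝ} (hc : 0 < c) (hca : c ≤ a) (hcb : c ≤ b) :
    |Real.log a - Real.log b| ≤ |a - b| / c := by
  have ha : 0 < a := lt_of_lt_of_le hc hca
  have hb : 0 < b := lt_of_lt_of_le hc hcb
  rw [abs_sub_le_iff]
  constructor
  · have h1 : Real.log a - Real.log b = Real.log (a / b) := (Real.log_div ha.ne' hb.ne').symm
    rw [h1]
    have h2 : Real.log (a / b) ≤ a / b - 1 := Real.log_le_sub_one_of_pos (by positivity)
    have h3 : a / b - 1 = (a - b) / b := by field_simp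
    have h4 : (a - b) / b ≤ |a - b| / c :=
      div_le_div₀ (abs_nonneg _) (le_abs_self _) hc hcb
    linarith
  · have h1 : Real.log b - Real.log a = Real.log (b / a) := (Real.log_div hb.ne' ha.ne').symm
    rw [h1]
    have h2 : Real.log (b / a) ≤ b / a - 1 := Real.log_le_sub_one_of_pos (by positivity)
    have h3 : b / a - 1 = (b - a) / a := by field_simp
    have h4 : (b - a) / a ≤ |a - b| / c :=
      div_le_div₀ (abs_nonneg _) (by rw [abs_sub_comm]; exact le_abs_self _) hc hca
    linarith

lemma abs_exp_sub_one_le' (u : ℝ) : |Real.exp u - 1| ≤ |u| * Real.exp |u| := by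
  rcases le_or_gt 0 u with h | h
  · rw [abs_of_nonneg h, abs_of_nonneg (by linarith [Real.one_le_exp h] : (0:ℝ) ≤ Real.exp u - 1)]
    have h2 : Real.exp (-u) * Real.exp u = 1 := by rw [← Real.exp_add]; simp
    nlinarith [Real.add_one_le_exp (-u), Real.exp_pos u, h2]
  · rw [abs_of_neg h]
    have h1 : Real.exp u < 1 := Real.exp_lt_one_iff.2 h
    rw [abs_of_nonpos (by linarith)]
    nlinarith [Real.add_one_le_exp u, Real.exp_pos (-u), Real.one_le_exp (by linarith : 0 ≤ -u)]

lemma div_le_div_of_nonneg_right' {a b c : ℝ} (h : a ≤ b) (hc : 0 < c) : a / c ≤ b / c :=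
  (div_le_div_iff_of_pos_right hc).mpr h

theorem gamma_ratio_quantitative (α θ : ℝ) (hα0 : 0 < α) (hα1 : α < 1) (hθ : -α < θ) :
    ∃ C > 0, ∀ n k : ℕ, 1 ≤ n → 1 ≤ k → 2 * k ≤ n →
      (k : ℝ) ≤ (n : ℝ) ^ (α / (2 * α + 4)) →
      |Real.Gamma ((n : ℝ) - k + α + θ) / Real.Gamma ((n : ℝ) + θ) * (n : ℝ) ^ ((k : ℝ) - α) - 1| ≤
        C * (k : ℝ) ^ 2 / ((n : ℝ) - k) := by
  set C₁ : ℝ := 4 * |θ| + 6 with hC₁def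
  have hC₁pos : 0 < C₁ := by positivity
  refine ⟨C₁ * Real.exp (2 * C₁), by positivity, ?_⟩
  intro n k hn hk h2k hkN
  have hN1 : (1:ℝ) ≤ (n : ℝ) := by exact_mod_cast hn
  have hK1 : (1:ℝ) ≤ (k : ℝ) := by exact_mod_cast hk
  have h2K : 2 * (k : ℝ) ≤ (n : ℝ) := by exact_mod_cast h2k
  have hcast : ((k - 1 : ℕ) : ℝ) = (k : ℝ) - 1 := by
    rw [Nat.cast_sub hk, Nat.cast_one]
  set N : ℝ := (n : ℝ) with hNdef
  set K : ℝ := (k : ℝ) with hKdef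
  have hNpos : (0:ℝ) < N := by linarith
  have hNKpos : (0:ℝ) < N - K := by linarith
  have hNK1 : (1:ℝ) ≤ N - K := by linarith
  have hhalf : N / 2 ≤ N - K := by linarith
  have hθ1 : -1 < θ := by linarith
  have habs1 : θ ≤ |θ| := le_abs_self θ
  have habs2 : -|θ| ≤ θ := neg_abs_le θ
  set x : ℝ := N - K + θ with hxdef
  have hx : 0 < x := by rw [hxdef]; linarith
  have hxα : 0 < x + α := by linarith
  have hx1 : 0 < x + 1 := by linarith
  have hNθ : 0 < N + θ := by linarith
  set c : ℝ := (1 - α) * (N - K) / 2 with hcdef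
  have hcpos : 0 < c := by
    rw [hcdef]
    exact div_pos (mul_pos (by linarith) hNKpos) two_pos
  have hcx : c ≤ x := by
    rw [hcdef, hxdef]
    linarith [mul_nonneg (by linarith : (0:ℝ) ≤ N - K - 1) (by linarith : (0:ℝ) ≤ 1 + α)]
  have hcN : c ≤ N := by
    rw [hcdef]
    linarith [mul_nonneg hα0.le hNKpos.le]
  -- Gamma identities
  have hΓ1pos : 0 < Real.Gamma (x + α) := Real.Gamma_pos_of_pos hxα
  have hΓ2pos : 0 < Real.Gamma (x + 1) := Real.Gamma_pos_of_pos hx1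
  have hΓNpos : 0 < Real.Gamma (N + θ) := Real.Gamma_pos_of_pos hNθ
  have hprodpos : 0 < ∏ j ∈ Finset.range (k - 1), (x + 1 + (j : ℝ)) :=
    Finset.prod_pos (fun j _ => by positivity)
  have hG1 : Real.Gamma (N - K + α + θ) = Real.Gamma (x + α) := by
    congr 1; rw [hxdef]; ring
  have hkey : N + θ = (x + 1) + ((k - 1 : ℕ) : ℝ) := by
    rw [hcast, hxdef]; ring
  have hG2 : Real.Gamma (N + θ)
      = Real.Gamma (x + 1) * ∏ j ∈ Finset.range (k - 1), (x + 1 + (j : ℝ)) := by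
    rw [hkey]; exact gamma_prod (x + 1) hx1 (k - 1)
  set R : ℝ := Real.Gamma (N - K + α + θ) / Real.Gamma (N + θ) * N ^ (K - α) with hRdef
  have hRpos : 0 < R := by
    rw [hRdef, hG1]
    have : 0 < N ^ (K - α) := Real.rpow_pos_of_pos hNpos _
    positivity
  set L : ℝ := Real.log (Real.Gamma (x + 1)) - Real.log (Real.Gamma (x + α)) with hLdef
  set T : ℝ := ∑ j ∈ Finset.range (k - 1), (Real.log N - Real.log (x + 1 + (j : ℝ))) with hTdef
  -- log R decomposition
  have e1 : Real.log R = (K - α) * Real.log N + Real.log (Real.Gamma (x + α))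
      - Real.log (Real.Gamma (N + θ)) := by
    rw [hRdef, hG1, Real.log_mul (div_pos hΓ1pos hΓNpos).ne'
      (Real.rpow_pos_of_pos hNpos _).ne', Real.log_div hΓ1pos.ne' hΓNpos.ne',
      Real.log_rpow hNpos]
    ring
  have e2 : Real.log (Real.Gamma (N + θ)) = Real.log (Real.Gamma (x + 1))
      + ∑ j ∈ Finset.range (k - 1), Real.log (x + 1 + (j : ℝ)) := by
    rw [hG2, Real.log_mul hΓ2pos.ne' hprodpos.ne', Real.log_prod]
    intro j _
    positivity
  have e3 : T = (K - 1) * Real.log N - ∑ j ∈ Finset.range (k - 1), Real.log (x + 1 + (j : ℝ)) := by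
    rw [hTdef, Finset.sum_sub_distrib, Finset.sum_const, Finset.card_range, nsmul_eq_mul, hcast]
  have hlogR : Real.log R = T + ((1 - α) * Real.log N - L) := by
    rw [e1, e2, e3, hLdef]; ring
  -- bound on T
  have hterm : ∀ j ∈ Finset.range (k - 1),
      |Real.log N - Real.log (x + 1 + (j : ℝ))| ≤ (K + |θ|) / (N / 2) := by
    intro j hj
    have hjk : j + 2 ≤ k := by
      have := Finset.mem_range.mp hj; omega
    have hj' : (j : ℝ) + 2 ≤ K := by
      rw [hKdef]
      exact_mod_cast hjk
    have hj0 : (0:ℝ) ≤ (j : ℝ) := Nat.cast_nonneg j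
    have hcb : N / 2 ≤ x + 1 + (j : ℝ) := by rw [hxdef]; linarith
    have hca : N / 2 ≤ N := by linarith
    refine le_trans (abs_log_sub_log_le (by positivity) hca hcb) ?_
    have hnum : |N - (x + 1 + (j : ℝ))| ≤ K + |θ| := by
      have h1 : N - (x + 1 + (j : ℝ)) = (K - 1 - (j : ℝ)) - θ := by rw [hxdef]; ring
      rw [h1, abs_le]
      constructor <;> linarith
    exact div_le_div_of_nonneg_right' hnum (by positivity)
  have hT : |T| ≤ 2 * (1 + |θ|) * K ^ 2 / (N - K) := by
    have hT1 : |T| ≤ ∑ j ∈ Finset.range (k - 1),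
        |Real.log N - Real.log (x + 1 + (j : ℝ))| := by
      rw [hTdef]; exact Finset.abs_sum_le_sum_abs _ _
    have hT2 : ∑ j ∈ Finset.range (k - 1), |Real.log N - Real.log (x + 1 + (j : ℝ))|
        ≤ ∑ _j ∈ Finset.range (k - 1), (K + |θ|) / (N / 2) :=
      Finset.sum_le_sum hterm
    have hT3 : ∑ _j ∈ Finset.range (k - 1), (K + |θ|) / (N / 2)
        = ((k - 1 : ℕ) : ℝ) * ((K + |θ|) / (N / 2)) := by
      rw [Finset.sum_const, Finset.card_range, nsmul_eq_mul]
    have hT4 : ((k - 1 : ℕ) : ℝ) * ((K + |θ|) / (N / 2))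
        ≤ K * ((K + |θ|) / (N / 2)) := by
      apply mul_le_mul_of_nonneg_right _ (by positivity)
      rw [hcast]; linarith
    have hT5 : K * ((K + |θ|) / (N / 2)) = 2 * K * (K + |θ|) / N := by
      field_simp
    have hT6 : 2 * K * (K + |θ|) / N ≤ 2 * (1 + |θ|) * K ^ 2 / (N - K) := by
      rw [div_le_div_iff₀ hNpos hNKpos]
      have t1 : (0:ℝ) ≤ |θ| * N * (K - 1) :=
        mul_nonneg (mul_nonneg (abs_nonneg θ) hNpos.le) (by linarith)
      have t2 : (0:ℝ) ≤ K ^ 2 + |θ| * K := by positivity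
      have t3 : (0:ℝ) ≤ 2 * K := by linarith
      linarith [mul_nonneg t3 (add_nonneg t1 t2)]
    linarith
  -- bound on the Gautschi term
  have hL1 := gautschi_low hα0 hα1 hx
  have hL2 := gautschi_high hα0 hα1 hx
  have hb1 : |Real.log N - Real.log x| ≤ (K + |θ| + 1) / c := by
    refine le_trans (abs_log_sub_log_le hcpos hcN hcx) ?_
    have hnum : |N - x| ≤ K + |θ| + 1 := by
      have h1 : N - x = K - θ := by rw [hxdef]; ring
      rw [h1, abs_le]; constructor <;> linarith
    exact div_le_div_of_nonneg_right' hnum hcpos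
  have hb2 : |Real.log N - Real.log (x + α)| ≤ (K + |θ| + 1) / c := by
    refine le_trans (abs_log_sub_log_le hcpos hcN (by linarith : c ≤ x + α)) ?_
    have hnum : |N - (x + α)| ≤ K + |θ| + 1 := by
      have h1 : N - (x + α) = K - θ - α := by rw [hxdef]; ring
      rw [h1, abs_le]; constructor <;> linarith
    exact div_le_div_of_nonneg_right' hnum hcpos
  have hterm2 : |(1 - α) * Real.log N - L| ≤ (1 - α) * ((K + |θ| + 1) / c) := by
    rw [abs_le]
    have hm1 := (abs_le.mp hb1).2
    have hm2 := (abs_le.mp hb2).1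
    have h1α : (0:ℝ) ≤ 1 - α := by linarith
    constructor
    · have := mul_le_mul_of_nonneg_left hm2 h1α
      linarith [hL2]
    · have := mul_le_mul_of_nonneg_left hm1 h1α
      linarith [hL1]
  have hceq : (1 - α) * ((K + |θ| + 1) / c) = 2 * (K + |θ| + 1) / (N - K) := by
    have h1a : (1:ℝ) - α ≠ 0 := by linarith
    have hNK0 : N - K ≠ 0 := hNKpos.ne'
    rw [hcdef]
    field_simp
  have hterm2' : |(1 - α) * Real.log N - L| ≤ 2 * (2 + |θ|) * K ^ 2 / (N - K) := by
    rw [hceq] at hterm2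
    refine le_trans hterm2 ?_
    apply div_le_div_of_nonneg_right' _ hNKpos
    have hKsq : K ≤ K ^ 2 := by
      linarith [mul_nonneg (by linarith : (0:ℝ) ≤ K) (by linarith : (0:ℝ) ≤ K - 1)]
    have hK21 : (1:ℝ) ≤ K ^ 2 := by linarith
    have hθK : (0:ℝ) ≤ |θ| * (K ^ 2 - 1) := mul_nonneg (abs_nonneg θ) (by linarith)
    linarith [hKsq, hK21, hθK]
  -- total bound on |log R|
  have hu : |Real.log R| ≤ C₁ * K ^ 2 / (N - K) := by
    have h1 : |Real.log R| ≤ |T| + |(1 - α) * Real.log N - L| := by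
      rw [hlogR]; exact abs_add_le _ _
    have h2 : 2 * (1 + |θ|) * K ^ 2 / (N - K) + 2 * (2 + |θ|) * K ^ 2 / (N - K)
        = C₁ * K ^ 2 / (N - K) := by
      rw [hC₁def]; ring
    linarith [hT, hterm2']
  -- boundedness of the bound
  have hK2N : K ^ 2 ≤ N := by
    have h1 : K ^ 2 ≤ (N ^ (α / (2 * α + 4))) ^ 2 :=
      pow_le_pow_left₀ (by positivity) hkN 2
    have h2 : (N ^ (α / (2 * α + 4))) ^ 2 = N ^ (α / (2 * α + 4) * 2) := by
      rw [← Real.rpow_natCast (N ^ (α / (2 * α + 4))) 2, ← Real.rpow_mul hNpos.le]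
      norm_num
    have h3 : N ^ (α / (2 * α + 4) * 2) ≤ N ^ (1:ℝ) := by
      apply Real.rpow_le_rpow_of_exponent_le hN1
      rw [div_mul_eq_mul_div, div_le_one (by linarith)]
      linarith
    rw [Real.rpow_one] at h3
    rw [h2] at h1
    linarith
  have hS : C₁ * K ^ 2 / (N - K) ≤ 2 * C₁ := by
    rw [div_le_iff₀ hNKpos]
    have a1 := mul_le_mul_of_nonneg_left hK2N hC₁pos.le
    have a2 : (0:ℝ) ≤ C₁ * (N - 2 * K) := mul_nonneg hC₁pos.le (by linarith)
    linarith [a1, a2]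
  -- conclude
  have hfin : |R - 1| ≤ C₁ * Real.exp (2 * C₁) * K ^ 2 / (N - K) := by
    have hexp : R = Real.exp (Real.log R) := (Real.exp_log hRpos).symm
    calc |R - 1| = |Real.exp (Real.log R) - 1| := by rw [← hexp]
      _ ≤ |Real.log R| * Real.exp |Real.log R| := abs_exp_sub_one_le' _
      _ ≤ (C₁ * K ^ 2 / (N - K)) * Real.exp (2 * C₁) := by
          apply mul_le_mul hu (Real.exp_le_exp.mpr (le_trans hu hS)) (Real.exp_pos _).le
            (by positivity)
      _ = C₁ * Real.exp (2 * C₁) * K ^ 2 / (N - K) := by ring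
  exact hfin
end
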